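/- Let ϑ be a primitive compatible random substitution whose subshift X_ϑ contains a periodic point. Then every entry of the ℓ¹-normalised right Perron–Frobenius eigenvector of the substitution matrix is rational, and the Perron–Frobenius eigenvalue λ is a positive integer. -/

import Mathlib

open List

variable {A : Type*}

/-- Extension of a random substitution to words, by concatenation. -/
def substWord (θ : A → Set (List A)) : List A → Set (List A)
  | [] => {[]}
  | a :: u => {w | ∃ x ∈ θ a, ∃ y ∈ substWord θ u, w = x ++ y}

/-- The set of realisations of `θ^k` on a word. -/
def substPowWord (θ : A → Set (List A)) : ℕ → List A → Set (List A)
  | 0, u => {u}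
  | (k+1), u => ⋃ v ∈ substPowWord θ k u, substWord θ v

/-- The power `θ^k` as a random substitution. -/
def powSub (θ : A → Set (List A)) (k : ℕ) : A → Set (List A) :=
  fun a => substPowWord θ k [a]

/-- `θ` is a (finite range) random substitution: every letter has a nonempty
finite set of realisations, all of which are nonempty words. -/
def RandomSubstitution (θ : A → Set (List A)) : Prop :=
  ∀ a : A, (θ a).Nonempty ∧ (θ a).Finite ∧ ∀ w ∈ θ a, w ≠ []

/-- A word is `θ`-legal if it is a subword of a realisation of some power of
`θ` on some letter. -/
def IsLegal (θ : A → Set (List A)) (u : List A) : Prop :=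
  ∃ k : ℕ, ∃ a : A, ∃ w ∈ substPowWord θ k [a], u <:+: w

/-- `θ` has disjoint images. -/
def HasDisjointImages (θ : A → Set (List A)) : Prop :=
  ∀ u v : List A, IsLegal θ u → IsLegal θ v →
    (substWord θ u ∩ substWord θ v).Nonempty → u = v

/-- `θ` has constant length `ℓ`. -/
def ConstantLength (θ : A → Set (List A)) (ℓ : ℕ) : Prop :=
  ∀ a : A, ∀ w ∈ θ a, w.length = ℓ

/-- `θ` is compatible: abelianisations of realisations are well defined. -/
def Compatible [DecidableEq A] (θ : A → Set (List A)) : Prop :=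
  ∀ a : A, ∀ u ∈ θ a, ∀ v ∈ θ a, ∀ b : A, u.count b = v.count b

/-- `θ` is primitive. -/
def Primitive (θ : A → Set (List A)) : Prop :=
  ∃ k : ℕ, ∀ a b : A, ∃ w ∈ substPowWord θ k [a], b ∈ w

/-- The finite subword of a bi-infinite sequence starting at `i`, of length `n`. -/
def extract (x : ℤ → A) (i : ℤ) (n : ℕ) : List A :=
  (List.range n).map fun j => x (i + j)

/-- The RS-subshift of `θ`: bi-infinite sequences all of whose subwords are legal. -/
def Subshift (θ : A → Set (List A)) : Set (ℤ → A) :=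
  {x | ∀ i : ℤ, ∀ n : ℕ, IsLegal θ (extract x i n)}

/-- `x` is a realisation-wise image of `y` under `θ`: there is a decomposition
of `x` into consecutive inflation words, with a cut at the origin, the `n`-th
of which is a realisation of `θ` on `y n`. -/
def SeqImage (θ : A → Set (List A)) (y x : ℤ → A) : Prop :=
  ∃ c : ℤ → ℤ, c 0 = 0 ∧ (∀ n : ℤ, c n < c (n + 1)) ∧
    ∀ n : ℤ, extract x (c n) (c (n + 1) - c n).toNat ∈ θ (y n)

/-- `θ` is globally uniquely recognisable. -/
def GloballyUniquelyRecognisable (θ : A → Set (List A)) : Prop :=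
  ∀ x ∈ Subshift θ, ∃! y : ℤ → A, y ∈ Subshift θ ∧
    ∃ k : ℕ, (∃ w ∈ θ (y 0), k < w.length) ∧ SeqImage θ y (fun n => x (n - k))

/-- `x` has period `p` (as a natural number, acting on indices in `ℤ`). -/
def HasPeriod (x : ℤ → A) (p : ℕ) : Prop :=
  ∀ n : ℤ, x (n + p) = x n

/-- `x` is shift-periodic. -/
def IsPeriodic (x : ℤ → A) : Prop :=
  ∃ p : ℕ, 0 < p ∧ HasPeriod x p

/-- `p` is the prime (least) period of `x`. -/
def PrimePeriod (x : ℤ → A) (p : ℕ) : Prop :=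
  0 < p ∧ HasPeriod x p ∧ ∀ q : ℕ, 0 < q → HasPeriod x q → p ≤ q

/-- `u` is a periodic block for `x`: up to shift, `x` is the bi-infinite
repetition of `u`. -/
def PeriodicBlock (u : List A) (x : ℤ → A) : Prop :=
  u ≠ [] ∧ ∃ i : ℤ, ∀ n : ℤ, extract x (i + n * u.length) u.length = u

/-! The letter frequencies of a periodic point are those of its periodic block, hence rational;
the point is that they equal `R`. Conjugating `M / λ` by `diag R` gives a stochastic matrix whose
power dominates a positive measure by primitivity, so by Doeblin's contraction the columns of
`M ^ K` become proportional to `R`. A legal word is, up to two short boundary pieces, a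
concatenation of level-`K` inflation words, so long legal words, in particular the powers of the
periodic block, have frequency at least `R a - ε` for each letter `a`; as frequencies sum to one,
those of the block are exactly `R`. Then the block's letter counts form an integer eigenvector, so
`λ` is rational, and as an eigenvalue of an integer matrix it is an algebraic integer, hence an
integer; it is at least `1` since no letter is sent to the empty word. -/

open scoped Matrix

section Substitution

variable {θ : A → Set (List A)}

lemma mem_substWord_append {u v w : List A} :
    w ∈ substWord θ (u ++ v) ↔ ∃ x ∈ substWord θ u, ∃ y ∈ substWord θ v, w = x ++ y := by
  induction u generalizing w with
  | nil => simp [substWord]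
  | cons b u ih =>
    constructor
    · rintro ⟨x, hx, y, hy, rfl⟩
      obtain ⟨y₁, hy₁, y₂, hy₂, rfl⟩ := ih.mp hy
      exact ⟨x ++ y₁, ⟨x, hx, y₁, hy₁, rfl⟩, y₂, hy₂, (append_assoc _ _ _).symm⟩
    · rintro ⟨_, ⟨x₁, hx₁, x₂, hx₂, rfl⟩, y, hy, rfl⟩
      exact ⟨x₁, hx₁, x₂ ++ y, ih.mpr ⟨x₂, hx₂, y, hy, rfl⟩, append_assoc _ _ _⟩

lemma mem_substPowWord_succ {k : ℕ} {u w : List A} :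
    w ∈ substPowWord θ (k + 1) u ↔ ∃ v ∈ substPowWord θ k u, w ∈ substWord θ v := by
  simp [substPowWord]

lemma mem_substPowWord_append {k : ℕ} {u v w : List A} :
    w ∈ substPowWord θ k (u ++ v) ↔
      ∃ x ∈ substPowWord θ k u, ∃ y ∈ substPowWord θ k v, w = x ++ y := by
  induction k generalizing w with
  | zero => simp [substPowWord]
  | succ k ih =>
    simp only [mem_substPowWord_succ, ih]
    constructor
    · rintro ⟨_, ⟨x, hx, y, hy, rfl⟩, hw⟩
      obtain ⟨x', hx', y', hy', rfl⟩ := mem_substWord_append.mp hw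
      exact ⟨x', ⟨x, hx, hx'⟩, y', ⟨y, hy, hy'⟩, rfl⟩
    · rintro ⟨x', ⟨x, hx, hx'⟩, y', ⟨y, hy, hy'⟩, rfl⟩
      exact ⟨x ++ y, ⟨x, hx, y, hy, rfl⟩, mem_substWord_append.mpr ⟨x', hx', y', hy', rfl⟩⟩

lemma substPowWord_nil (k : ℕ) : substPowWord θ k [] = {[]} := by
  induction k with
  | zero => rfl
  | succ k ih => simp [substPowWord, ih, substWord]

lemma substPowWord_eq_substWord_powSub (k : ℕ) (u : List A) :
    substPowWord θ k u = substWord (powSub θ k) u := by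
  induction u with
  | nil => simp [substPowWord_nil, substWord]
  | cons b u ih =>
    ext w
    rw [← singleton_append, mem_substPowWord_append, ih]
    rfl

lemma mem_substPowWord_add {j k : ℕ} {u w : List A} :
    w ∈ substPowWord θ (j + k) u ↔ ∃ z ∈ substPowWord θ j u, w ∈ substPowWord θ k z := by
  induction k generalizing w with
  | zero => simp [substPowWord]
  | succ k ih =>
    simp only [← add_assoc, mem_substPowWord_succ, ih]
    constructor
    · rintro ⟨v, ⟨z, hz, hv⟩, hw⟩
      exact ⟨z, hz, v, hv, hw⟩
    · rintro ⟨z, hz, v, hv, hw⟩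
      exact ⟨v, ⟨z, hz, hv⟩, hw⟩

end Substitution

section Counting

variable [Fintype A] [DecidableEq A]

def IsSubstitutionMatrix (θ : A → Set (List A)) (M : Matrix A A ℕ) : Prop :=
  ∀ b : A, ∀ u ∈ θ b, ∀ a : A, u.count a = M a b

lemma length_eq_sum_count (w : List A) : w.length = ∑ a, w.count a := by
  simpa using (Multiset.sum_count_eq_card (s := Finset.univ) (m := (w : Multiset A))
    (fun a _ => Finset.mem_univ a)).symm

variable {θ : A → Set (List A)} {M : Matrix A A ℕ}

lemma IsSubstitutionMatrix.count_of_mem_substWord (hM : IsSubstitutionMatrix θ M)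
    {u w : List A} (hw : w ∈ substWord θ u) (a : A) :
    w.count a = (M *ᵥ fun b => u.count b) a := by
  induction u generalizing w with
  | nil =>
    obtain rfl : w = [] := hw
    simp [Matrix.mulVec, dotProduct]
  | cons b u ih =>
    obtain ⟨x, hx, y, hy, rfl⟩ := hw
    simp [count_append, hM b x hx a, ih hy, count_cons, Matrix.mulVec, dotProduct,
      mul_add, Finset.sum_add_distrib, add_comm]

lemma IsSubstitutionMatrix.count_of_mem_substPowWord (hM : IsSubstitutionMatrix θ M)
    {k : ℕ} {u w : List A} (hw : w ∈ substPowWord θ k u) (a : A) :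
    w.count a = (M ^ k *ᵥ fun b => u.count b) a := by
  induction k generalizing w a with
  | zero =>
    obtain rfl : w = u := hw
    simp
  | succ k ih =>
    obtain ⟨v, hv, hw⟩ := mem_substPowWord_succ.mp hw
    rw [hM.count_of_mem_substWord hw, funext fun c => ih hv c, Matrix.mulVec_mulVec, pow_succ']

lemma IsSubstitutionMatrix.count_of_mem_substPowWord_singleton
    (hM : IsSubstitutionMatrix θ M) {k : ℕ} {b : A} {w : List A}
    (hw : w ∈ substPowWord θ k [b]) (a : A) : w.count a = (M ^ k) a b := by
  rw [hM.count_of_mem_substPowWord hw]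
  simp [Matrix.mulVec, dotProduct, count_singleton']

end Counting

section Weight

variable {σ : A → Set (List A)} {φ : A → ℝ} {T : ℕ}

lemma sum_map_le_length (hφ : ∀ c, φ c ≤ 1) (s : List A) : (s.map φ).sum ≤ s.length := by
  simpa using List.sum_le_card_nsmul (s.map φ) 1 (by simpa using fun c _ => hφ c)

lemma sum_map_sub_indicator [DecidableEq A] (γ : ℝ) (a : A) (s : List A) :
    (s.map fun c => γ - if c = a then 1 else 0).sum = γ * s.length - s.count a := by
  induction s with
  | nil => simp
  | cons c s ih =>
    simp only [map_cons, sum_cons, ih, length_cons, count_cons, beq_iff_eq]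
    split_ifs <;> push_cast <;> ring

lemma sum_map_le_of_prefix_of_mem_substWord (hφ : ∀ c, φ c ≤ 1)
    (himg : ∀ b, ∀ x ∈ σ b, (x.map φ).sum ≤ 0 ∧ x.length ≤ T) {z w t : List A}
    (hw : w ∈ substWord σ z) (ht : t <+: w) : (t.map φ).sum ≤ T := by
  induction z generalizing w t with
  | nil =>
    obtain rfl : w = [] := hw
    simp [prefix_nil.mp ht]
  | cons b z ih =>
    obtain ⟨x, hx, y, hy, rfl⟩ := hw
    obtain ⟨q, hq⟩ := ht
    rcases append_eq_append_iff.mp hq with ⟨r, rfl, -⟩ | ⟨r, rfl, rfl⟩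
    · calc ((t.map φ).sum : ℝ) ≤ t.length := sum_map_le_length hφ t
        _ ≤ T := by exact_mod_cast (prefix_append t r).length_le.trans (himg b _ hx).2
    · calc ((x ++ r).map φ).sum = (x.map φ).sum + (r.map φ).sum := by simp
        _ ≤ 0 + T := add_le_add (himg b x hx).1 (ih hy (prefix_append r q))
        _ = T := zero_add _

lemma sum_map_le_of_infix_of_mem_substWord (hφ : ∀ c, φ c ≤ 1)
    (himg : ∀ b, ∀ x ∈ σ b, (x.map φ).sum ≤ 0 ∧ x.length ≤ T) {z w t : List A}
    (hw : w ∈ substWord σ z) (ht : t <:+: w) : (t.map φ).sum ≤ 2 * T := by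
  have short : ∀ b, ∀ x ∈ σ b, ∀ t : List A, t <:+: x → (t.map φ).sum ≤ T := fun b x hx t ht =>
    (sum_map_le_length hφ t).trans (by exact_mod_cast ht.length_le.trans (himg b x hx).2)
  induction z generalizing w t with
  | nil =>
    obtain rfl : w = [] := hw
    simp [infix_nil.mp ht]
  | cons b z ih =>
    obtain ⟨x, hx, y, hy, rfl⟩ := hw
    rcases infix_append_iff.mp ht with htx | hty | ⟨t₁, t₂, rfl, ht₁, ht₂⟩
    · linarith [short b x hx t htx, (Nat.cast_nonneg T : (0 : ℝ) ≤ T)]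
    · exact ih hy hty
    · have h₁ := short b x hx t₁ ht₁.isInfix
      have h₂ := sum_map_le_of_prefix_of_mem_substWord hφ himg hy ht₂
      simp only [map_append, sum_append]
      linarith

end Weight

section Legal

variable [Fintype A] [DecidableEq A] {θ : A → Set (List A)} {M : Matrix A A ℕ}

lemma IsSubstitutionMatrix.exists_length_le (hM : IsSubstitutionMatrix θ M) (K : ℕ) :
    ∃ T : ℕ, ∀ n ≤ K, ∀ b, ∀ x ∈ substPowWord θ n [b], x.length ≤ T := by
  refine ⟨∑ n ∈ Finset.range (K + 1), ∑ a, ∑ b, (M ^ n) a b, fun n hn b x hx => ?_⟩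
  calc x.length = ∑ a, (M ^ n) a b := by
        rw [length_eq_sum_count]
        exact Finset.sum_congr rfl fun a _ => hM.count_of_mem_substPowWord_singleton hx a
    _ ≤ ∑ a, ∑ b, (M ^ n) a b :=
        Finset.sum_le_sum fun a _ => Finset.single_le_sum (by simp) (Finset.mem_univ b)
    _ ≤ _ := Finset.single_le_sum (f := fun n => ∑ a, ∑ b, (M ^ n) a b) (by simp)
        (Finset.mem_range_succ_iff.mpr hn)

lemma IsSubstitutionMatrix.exists_forall_isLegal_sum_map_le (hM : IsSubstitutionMatrix θ M)
    {φ : A → ℝ} (hφ : ∀ c, φ c ≤ 1) {K : ℕ}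
    (hK : ∀ b, ∀ x ∈ substPowWord θ K [b], (x.map φ).sum ≤ 0) :
    ∃ B : ℝ, ∀ s, IsLegal θ s → (s.map φ).sum ≤ B := by
  obtain ⟨T, hT⟩ := hM.exists_length_le K
  refine ⟨2 * T, fun s ⟨n, c, w, hw, hs⟩ => ?_⟩
  rcases le_or_gt K n with hKn | hnK
  · rw [← Nat.sub_add_cancel hKn, mem_substPowWord_add] at hw
    obtain ⟨z, -, hw⟩ := hw
    rw [substPowWord_eq_substWord_powSub] at hw
    exact sum_map_le_of_infix_of_mem_substWord hφ
      (fun b x hx => ⟨hK b x hx, hT K le_rfl b x hx⟩) hw hs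
  · have hsT : (s.length : ℝ) ≤ T := by exact_mod_cast hs.length_le.trans (hT n hnK.le c w hw)
    linarith [sum_map_le_length hφ s, (Nat.cast_nonneg T : (0 : ℝ) ≤ T)]

lemma IsSubstitutionMatrix.exists_forall_isLegal_count_ge (hM : IsSubstitutionMatrix θ M)
    {a : A} {γ : ℝ} (hγ : γ ≤ 1) {K : ℕ} (hK : ∀ b, γ * ∑ c, ((M ^ K) c b : ℝ) ≤ (M ^ K) a b) :
    ∃ B : ℝ, ∀ s, IsLegal θ s → γ * s.length - B ≤ s.count a := by
  have hφ : ∀ c, (γ - if c = a then 1 else 0) ≤ 1 := fun c => by split_ifs <;> linarith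
  obtain ⟨B, hB⟩ := hM.exists_forall_isLegal_sum_map_le hφ (K := K) fun b x hx => by
    rw [sum_map_sub_indicator, length_eq_sum_count]
    simp only [hM.count_of_mem_substPowWord_singleton hx]
    push_cast
    linarith [hK b]
  exact ⟨B, fun s hs => by linarith [hB s hs, sum_map_sub_indicator γ a s]⟩

end Legal

section Periodic

lemma extract_eq_map (x : ℤ → A) (i : ℤ) (n : ℕ) :
    _root_.extract x i n = (range n).map fun j : ℕ => x (i + j) := by
  simp [_root_.extract, ← map_eq_flatMap]

lemma length_extract (x : ℤ → A) (i : ℤ) (n : ℕ) : (_root_.extract x i n).length = n := by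
  simp [extract_eq_map]

lemma extract_add (x : ℤ → A) (i : ℤ) (m n : ℕ) :
    _root_.extract x i (m + n) = _root_.extract x i m ++ _root_.extract x (i + m) n := by
  simp only [extract_eq_map, range_add, map_append, map_map]
  congr 2
  ext j
  simp [add_assoc]

variable {x : ℤ → A} {p : ℕ}

lemma HasPeriod.extract_add_self (hp : HasPeriod x p) (i : ℤ) (n : ℕ) :
    _root_.extract x (i + p) n = _root_.extract x i n := by
  simp only [extract_eq_map, add_right_comm i (p : ℤ), hp _]

lemma HasPeriod.count_extract_mul [DecidableEq A] (hp : HasPeriod x p) (i : ℤ) (n : ℕ)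
    (a : A) : (_root_.extract x i (n * p)).count a = n * (_root_.extract x i p).count a := by
  induction n with
  | zero => simp [extract_eq_map]
  | succ n ih => rw [add_mul, one_mul, add_comm, extract_add, count_append,
      hp.extract_add_self, ih, add_mul, one_mul, add_comm]

lemma le_of_forall_nat_mul_le_add {x y B : ℝ} (h : ∀ n : ℕ, n * x ≤ n * y + B) : x ≤ y := by
  by_contra! hxy
  obtain ⟨n, hn⟩ := exists_nat_gt (B / (x - y))
  have := (div_lt_iff₀ (sub_pos.mpr hxy)).mp hn
  linarith [h n]

variable [Fintype A] [DecidableEq A] {θ : A → Set (List A)} {M : Matrix A A ℕ}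

lemma IsSubstitutionMatrix.mul_le_count_extract (hM : IsSubstitutionMatrix θ M)
    (hx : x ∈ Subshift θ) (hp : HasPeriod x p) {a : A} {γ : ℝ} (hγ : γ ≤ 1) {K : ℕ}
    (hK : ∀ b, γ * ∑ c, ((M ^ K) c b : ℝ) ≤ (M ^ K) a b) :
    γ * p ≤ (_root_.extract x 0 p).count a := by
  obtain ⟨B, hB⟩ := hM.exists_forall_isLegal_count_ge hγ hK
  refine le_of_forall_nat_mul_le_add (B := B) fun n => ?_
  have := hB _ (hx 0 (n * p))
  rw [length_extract, hp.count_extract_mul] at this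
  push_cast at this
  linarith

end Periodic

section PerronFrobenius

open Matrix

variable [Fintype A]

/-- Doeblin's contraction: a stochastic matrix whose entries dominate a positive measure `δ`
shrinks the oscillation of a vector by the factor `1 - ∑ δ`. -/
lemma doeblin_mulVec_sub_le {S : Matrix A A ℝ} (hS : ∀ a, ∑ c, S a c = 1) {δ : A → ℝ}
    (hδ : ∀ a c, δ c ≤ S a c) {v : A → ℝ} {d : ℝ} (hv : ∀ c c', v c - v c' ≤ d) (a a' : A) :
    (S *ᵥ v) a - (S *ᵥ v) a' ≤ (1 - ∑ c, δ c) * d := by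
  obtain ⟨c₀, -, hc₀⟩ := Finset.exists_min_image Finset.univ v ⟨a, Finset.mem_univ a⟩
  calc (S *ᵥ v) a - (S *ᵥ v) a' = ∑ c, (S a c - S a' c) * (v c - v c₀) := by
        simp only [Matrix.mulVec, dotProduct, sub_mul, mul_sub, Finset.sum_sub_distrib,
          ← Finset.sum_mul, hS]
        ring
    _ ≤ ∑ c, (S a c - δ c) * d := by
        refine Finset.sum_le_sum fun c _ => ?_
        have hv₀ := hc₀ c (Finset.mem_univ c)
        calc (S a c - S a' c) * (v c - v c₀) ≤ (S a c - δ c) * (v c - v c₀) :=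
              mul_le_mul_of_nonneg_right (by linarith [hδ a' c]) (by linarith)
          _ ≤ (S a c - δ c) * d := mul_le_mul_of_nonneg_left (hv c c₀) (by linarith [hδ a c])
    _ = (1 - ∑ c, δ c) * d := by rw [← Finset.sum_mul, Finset.sum_sub_distrib, hS]

lemma le_one_of_sum_eq_one {R : A → ℝ} (hR : ∀ a, 0 ≤ R a) (hsum : ∑ a, R a = 1) (a : A) :
    R a ≤ 1 :=
  hsum ▸ Finset.single_le_sum (fun c _ => hR c) (Finset.mem_univ a)

lemma sub_mul_average_le_of_oscillation_le {R : A → ℝ} (hRpos : ∀ a, 0 < R a)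
    (hsum : ∑ a, R a = 1) {Q : A → ℝ} {δ ε : ℝ} (hε : 0 ≤ ε) (hlow : ∀ c, δ ≤ Q c) (hδ : 0 ≤ δ)
    (a : A) (hosc : ∀ c, Q c - Q a ≤ ε * δ) : (R a - ε) * ∑ c, R c * Q c ≤ R a * Q a := by
  have hRa := le_one_of_sum_eq_one (fun c => (hRpos c).le) hsum a
  have hweight : ∀ y, ∑ c, R c * y = y := fun y => by rw [← Finset.sum_mul, hsum, one_mul]
  have hupper : ∑ c, R c * Q c ≤ Q a + ε * δ := by
    conv_rhs => rw [← hweight (Q a + ε * δ)]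
    exact Finset.sum_le_sum fun c _ =>
      mul_le_mul_of_nonneg_left (by linarith [hosc c]) (hRpos c).le
  have hlower : δ ≤ ∑ c, R c * Q c := by
    conv_lhs => rw [← hweight δ]
    exact Finset.sum_le_sum fun c _ => mul_le_mul_of_nonneg_left (hlow c) (hRpos c).le
  nlinarith [mul_le_mul_of_nonneg_left hupper (hRpos a).le, mul_le_mul_of_nonneg_left hlower hε,
    mul_le_mul_of_nonneg_left hRa (mul_nonneg hε hδ)]

variable [DecidableEq A]

lemma doeblin_pow_sub_le {P : Matrix A A ℝ} (hP : P ∈ rowStochastic ℝ A) {k : ℕ} {δ : A → ℝ}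
    (hδ : ∀ a c, δ c ≤ (P ^ k) a c) (m : ℕ) (a a' b : A) :
    (P ^ (k * m)) a b - (P ^ (k * m)) a' b ≤ (1 - ∑ c, δ c) ^ m := by
  induction m generalizing a a' with
  | zero =>
    simp only [mul_zero, pow_zero, Matrix.one_apply]
    split_ifs <;> norm_num
  | succ m ih =>
    have hcol : ∀ a, (P ^ (k * (m + 1))) a b = (P ^ k *ᵥ fun c => (P ^ (k * m)) c b) a :=
      fun a => by rw [mul_add_one, add_comm, pow_add]; rfl
    rw [hcol, hcol, pow_succ']
    exact doeblin_mulVec_sub_le (sum_row_of_mem_rowStochastic (pow_mem hP k)) hδ ih a a'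

lemma le_mul_apply_of_le {T S : Matrix A A ℝ} (hT : T ∈ rowStochastic ℝ A) {δ : A → ℝ}
    (hδ : ∀ a c, δ c ≤ S a c) (a b : A) : δ b ≤ (T * S) a b :=
  calc δ b = ∑ c, T a c * δ b := by rw [← Finset.sum_mul, sum_row_of_mem_rowStochastic hT, one_mul]
    _ ≤ (T * S) a b := Finset.sum_le_sum fun c _ =>
        mul_le_mul_of_nonneg_left (hδ c b) (nonneg_of_mem_rowStochastic hT)

lemma exists_pow_apply_sub_le [Nonempty A] {P : Matrix A A ℝ} (hP : P ∈ rowStochastic ℝ A)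
    {k : ℕ} {δ : A → ℝ} (hδ : ∀ a c, δ c ≤ (P ^ k) a c) (hδpos : ∀ c, 0 < δ c) {ε : ℝ}
    (hε : 0 < ε) : ∃ K, ∀ a b c, δ b ≤ (P ^ K) c b ∧ (P ^ K) c b - (P ^ K) a b ≤ ε * δ b := by
  obtain ⟨a₀⟩ := ‹Nonempty A›
  have hq0 : 0 ≤ 1 - ∑ c, δ c := by
    rw [sub_nonneg, ← sum_row_of_mem_rowStochastic (pow_mem hP k) a₀]
    exact Finset.sum_le_sum fun c _ => hδ a₀ c
  have hq1 : 1 - ∑ c, δ c < 1 :=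
    sub_lt_self 1 (Finset.sum_pos (fun c _ => hδpos c) Finset.univ_nonempty)
  obtain ⟨m, hm⟩ : ∃ m, ∀ b, (1 - ∑ c, δ c) ^ m ≤ ε * δ b :=
    (Filter.eventually_all.mpr fun b => (tendsto_pow_atTop_nhds_zero_of_lt_one hq0 hq1).eventually
      (ge_mem_nhds (mul_pos hε (hδpos b)))).exists
  refine ⟨k * (m + 1), fun a b c => ⟨?_, ?_⟩⟩
  · rw [mul_add_one, pow_add]
    exact le_mul_apply_of_le (pow_mem hP _) hδ c b
  · exact (doeblin_pow_sub_le hP hδ (m + 1) c a b).trans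
      ((pow_le_pow_of_le_one hq0 hq1.le (Nat.le_succ m)).trans (hm b))

/-- Doob's transform of `M / λ` by the eigenvector `R`. -/
noncomputable def doobTransform (M : Matrix A A ℕ) (R : A → ℝ) (lam : ℝ) : Matrix A A ℝ :=
  Matrix.of fun a b => M a b * R b / (lam * R a)

variable {M : Matrix A A ℕ} {R : A → ℝ} {lam : ℝ}

lemma doobTransform_mem_rowStochastic (hRpos : ∀ a, 0 < R a) (hlam : 0 < lam)
    (hEig : ∀ a, ∑ b, (M a b : ℝ) * R b = lam * R a) :
    doobTransform M R lam ∈ rowStochastic ℝ A := by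
  refine mem_rowStochastic_iff_sum.mpr ⟨fun a b => ?_, fun a => ?_⟩
  · have := hRpos a; have := hRpos b
    simp only [doobTransform, Matrix.of_apply]
    positivity
  · simp only [doobTransform, Matrix.of_apply, ← Finset.sum_div, hEig]
    exact div_self (mul_pos hlam (hRpos a)).ne'

lemma doobTransform_pow_apply (hR : ∀ a, R a ≠ 0) (hlam : lam ≠ 0) (k : ℕ) (a b : A) :
    R a * lam ^ k * (doobTransform M R lam ^ k) a b = (M ^ k) a b * R b := by
  have hconj : SemiconjBy (Matrix.diagonal R) (doobTransform M R lam)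
      (lam⁻¹ • M.map (Nat.cast : ℕ → ℝ)) := by
    ext a b
    simp only [doobTransform, Matrix.diagonal_mul, Matrix.mul_diagonal, Matrix.of_apply,
      Matrix.smul_apply, Matrix.map_apply, smul_eq_mul]
    field_simp [hR a]
  have hmap : M.map (Nat.cast : ℕ → ℝ) ^ k = (M ^ k).map Nat.cast :=
    (Matrix.map_pow M (Nat.castRingHom ℝ) k).symm
  have := congrFun (congrFun (hconj.pow_right k) a) b
  simp only [Matrix.diagonal_mul, Matrix.mul_diagonal, smul_pow, Matrix.smul_apply, hmap,
    Matrix.map_apply, smul_eq_mul] at this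
  rw [mul_right_comm, this, mul_right_comm, mul_right_comm _ _ (lam ^ k), inv_pow,
    inv_mul_cancel₀ (pow_ne_zero k hlam), one_mul]

lemma exists_pow_apply_ge (hRpos : ∀ a, 0 < R a) (hsum : ∑ a, R a = 1) (hlam : 0 < lam)
    (hEig : ∀ a, ∑ b, (M a b : ℝ) * R b = lam * R a) (hprim : ∃ k, ∀ a b, 0 < (M ^ k) a b)
    {ε : ℝ} (hε : 0 < ε) : ∃ K, ∀ a b, (R a - ε) * ∑ c, ((M ^ K) c b : ℝ) ≤ (M ^ K) a b := by
  cases isEmpty_or_nonempty A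
  · exact ⟨0, fun a => isEmptyElim a⟩
  obtain ⟨k, hk⟩ := hprim
  have hP := doobTransform_mem_rowStochastic hRpos hlam hEig
  have hpow := doobTransform_pow_apply (M := M) (fun a => (hRpos a).ne') hlam.ne'
  have hδ : ∀ a c, R c / lam ^ k ≤ (doobTransform M R lam ^ k) a c := fun a c => by
    have hPk := nonneg_of_mem_rowStochastic (pow_mem hP k) (i := a) (j := c)
    rw [div_le_iff₀ (pow_pos hlam k)]
    calc R c ≤ (M ^ k) a c * R c := le_mul_of_one_le_left (hRpos c).le (by exact_mod_cast hk a c)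
      _ = R a * (lam ^ k * (doobTransform M R lam ^ k) a c) := by rw [← hpow]; ring
      _ ≤ 1 * (lam ^ k * (doobTransform M R lam ^ k) a c) := mul_le_mul_of_nonneg_right
          (le_one_of_sum_eq_one (fun c => (hRpos c).le) hsum a) (by positivity)
      _ = (doobTransform M R lam ^ k) a c * lam ^ k := by ring
  obtain ⟨K, hK⟩ := exists_pow_apply_sub_le hP hδ (fun c => div_pos (hRpos c) (pow_pos hlam k)) hε
  refine ⟨K, fun a b => le_of_mul_le_mul_right ?_ (hRpos b)⟩
  set Q := doobTransform M R lam ^ K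
  have key : (R a - ε) * ∑ c, R c * Q c b ≤ R a * Q a b :=
    sub_mul_average_le_of_oscillation_le hRpos hsum hε.le (fun c => (hK a b c).1)
      (div_pos (hRpos b) (pow_pos hlam k)).le a (fun c => (hK a b c).2)
  calc (R a - ε) * (∑ c, ((M ^ K) c b : ℝ)) * R b
      = (R a - ε) * ∑ c, lam ^ K * (R c * Q c b) := by
        rw [mul_assoc, Finset.sum_mul]
        congr 1
        exact Finset.sum_congr rfl fun c _ => by rw [← hpow]; ring
    _ = lam ^ K * ((R a - ε) * ∑ c, R c * Q c b) := by rw [← Finset.mul_sum]; ring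
    _ ≤ lam ^ K * (R a * Q a b) := mul_le_mul_of_nonneg_left key (pow_pos hlam K).le
    _ = (M ^ K) a b * R b := by rw [← hpow]; ring

end PerronFrobenius

lemma isIntegral_of_mulVec_eq_smul {n K : Type*} [Fintype n] [DecidableEq n] [Field K]
    (M : Matrix n n ℤ) {v : n → K} (hv : v ≠ 0) {μ : K}
    (h : M.map (Int.cast : ℤ → K) *ᵥ v = μ • v) : IsIntegral ℤ μ := by
  refine ⟨M.charpoly, M.charpoly_monic, ?_⟩
  rw [← Polynomial.eval_map, ← Matrix.charpoly_map, Matrix.eval_charpoly]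
  refine Matrix.exists_mulVec_eq_zero_iff.mp ⟨v, hv, ?_⟩
  rw [Matrix.sub_mulVec, algebraMap_int_eq, show ⇑(Int.castRingHom K) = Int.cast from rfl, h,
    sub_eq_zero]
  ext i
  simp [Matrix.mulVec_diagonal]

lemma exists_int_eq_of_isIntegral_of_eq_ratCast {x : ℝ} (hx : IsIntegral ℤ x) {q : ℚ}
    (hq : x = q) : ∃ z : ℤ, x = z := by
  have hqint : IsIntegral ℤ q :=
    (isIntegral_algHom_iff (Rat.castHom ℝ).toIntAlgHom Rat.cast_injective).mp
      (by simpa [hq] using hx)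
  obtain ⟨z, rfl⟩ := IsIntegrallyClosed.isIntegral_iff.mp hqint
  exact ⟨z, by simp [hq]⟩

lemma exists_int_eq_of_mulVec_eq_smul [Fintype A] [DecidableEq A] (M : Matrix A A ℕ)
    {v : A → ℕ} {a : A} (ha : (v a : ℝ) ≠ 0) {μ : ℝ}
    (h : ∀ b, ∑ c, (M b c : ℝ) * v c = μ * v b) : ∃ z : ℤ, μ = z := by
  have hint : IsIntegral ℤ μ := isIntegral_of_mulVec_eq_smul (M.map (Nat.cast : ℕ → ℤ))
    (v := fun b => (v b : ℝ)) (fun h0 => ha (congrFun h0 a)) (by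
      ext b; simpa [Matrix.mulVec, dotProduct] using h b)
  exact exists_int_eq_of_isIntegral_of_eq_ratCast hint
    (q := (∑ c, M a c * v c : ℕ) / (v a : ℚ)) (by push_cast; rw [eq_div_iff ha, h])

section Main

variable [Fintype A] [DecidableEq A] {θ : A → Set (List A)} {M : Matrix A A ℕ}
  {R : A → ℝ} {lam : ℝ}

lemma IsSubstitutionMatrix.one_le_eigenvalue (hM : IsSubstitutionMatrix θ M)
    (hθ : RandomSubstitution θ) (hRpos : ∀ a, 0 < R a) (hsum : ∑ a, R a = 1)
    (hEig : ∀ a, ∑ b, (M a b : ℝ) * R b = lam * R a) : 1 ≤ lam := by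
  have hcol : ∀ b, (1 : ℝ) ≤ ∑ a, (M a b : ℝ) := fun b => by
    obtain ⟨w, hw⟩ := (hθ b).1
    have hlen : w.length = ∑ a, M a b := by
      rw [length_eq_sum_count]; exact Finset.sum_congr rfl fun a _ => hM b w hw a
    exact_mod_cast hlen ▸ length_pos_iff.mpr ((hθ b).2.2 w hw)
  calc 1 = ∑ b, R b := hsum.symm
    _ ≤ ∑ b, (∑ a, (M a b : ℝ)) * R b :=
        Finset.sum_le_sum fun b _ => le_mul_of_one_le_left (hRpos b).le (hcol b)
    _ = lam := by
        simp only [Finset.sum_mul]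
        rw [Finset.sum_comm]
        simp only [hEig, ← Finset.mul_sum, hsum, mul_one]

lemma IsSubstitutionMatrix.exists_pow_pos (hM : IsSubstitutionMatrix θ M)
    (hprim : Primitive θ) : ∃ k, ∀ a b, 0 < (M ^ k) a b := by
  obtain ⟨k, hk⟩ := hprim
  refine ⟨k, fun a b => ?_⟩
  obtain ⟨w, hw, haw⟩ := hk b a
  exact hM.count_of_mem_substPowWord_singleton hw a ▸ count_pos_iff.mpr haw

lemma IsSubstitutionMatrix.count_extract_eq_mul (hM : IsSubstitutionMatrix θ M)
    (hprim : Primitive θ) (hRpos : ∀ a, 0 < R a) (hsum : ∑ a, R a = 1) (hlam : 0 < lam)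
    (hEig : ∀ a, ∑ b, (M a b : ℝ) * R b = lam * R a) {x : ℤ → A} (hx : x ∈ Subshift θ)
    {p : ℕ} (hp0 : 0 < p) (hp : HasPeriod x p) (a : A) :
    ((_root_.extract x 0 p).count a : ℝ) = p * R a := by
  have hp0' : (0 : ℝ) < p := Nat.cast_pos.mpr hp0
  have hge : ∀ a, p * R a ≤ (_root_.extract x 0 p).count a := fun a => by
    refine le_of_forall_sub_le fun η hη => ?_
    obtain ⟨K, hK⟩ := exists_pow_apply_ge hRpos hsum hlam hEig (hM.exists_pow_pos hprim)
      (div_pos hη hp0')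
    have hγ : R a - η / p ≤ 1 := by
      linarith [le_one_of_sum_eq_one (fun c => (hRpos c).le) hsum a, div_pos hη hp0']
    have := hM.mul_le_count_extract hx hp hγ (hK a)
    rwa [sub_mul, div_mul_cancel₀ η hp0'.ne', mul_comm] at this
  have hsum_eq : ∑ a, (p * R a) = ∑ a, ((_root_.extract x 0 p).count a : ℝ) := by
    rw [← Finset.mul_sum, hsum, mul_one]
    exact_mod_cast (length_extract x 0 p ▸ length_eq_sum_count _)
  exact ((Finset.sum_eq_sum_iff_of_le fun a _ => hge a).mp hsum_eq a (Finset.mem_univ a)).symm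

end Main

theorem periodic_implies_rational_integer_general [Fintype A] [DecidableEq A]
    (θ : A → Set (List A)) (hθ : RandomSubstitution θ)
    (hprim : Primitive θ)
    (M : A → A → ℕ) (hM : ∀ b : A, ∀ u ∈ θ b, ∀ a : A, u.count a = M a b)
    (R : A → ℝ) (hRpos : ∀ a : A, 0 < R a) (hsum : (∑ a : A, R a) = 1)
    (lam : ℝ) (hEig : ∀ a : A, (∑ b : A, (M a b : ℝ) * R b) = lam * R a)
    (hper : ∃ x ∈ Subshift θ, IsPeriodic x) :
    (∀ a : A, ∃ q : ℚ, R a = (q : ℝ)) ∧ ∃ m : ℕ, 0 < m ∧ lam = (m : ℝ) := by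
  obtain ⟨x, hx, p, hp0, hp⟩ := hper
  have hM' : IsSubstitutionMatrix θ M := hM
  have hlam := hM'.one_le_eigenvalue hθ hRpos hsum hEig
  set v : A → ℕ := fun a => (_root_.extract x 0 p).count a
  have hv : ∀ a, (v a : ℝ) = p * R a :=
    hM'.count_extract_eq_mul hprim hRpos hsum (one_pos.trans_le hlam) hEig hx hp0 hp
  have hvpos : ∀ a, (0 : ℝ) < v a := fun a => hv a ▸ mul_pos (Nat.cast_pos.mpr hp0) (hRpos a)
  refine ⟨fun a => ⟨v a / p, ?_⟩, ?_⟩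
  · push_cast
    rw [hv, mul_div_cancel_left₀ _ (Nat.cast_ne_zero.mpr hp0.ne')]
  obtain ⟨a⟩ : Nonempty A := ⟨x 0⟩
  obtain ⟨z, rfl⟩ := exists_int_eq_of_mulVec_eq_smul (Matrix.of M) (μ := lam) (hvpos a).ne'
    fun b => by simp only [Matrix.of_apply, hv, mul_left_comm _ (p : ℝ), ← Finset.mul_sum, hEig]
  have hz : 1 ≤ z := by exact_mod_cast hlam
  exact ⟨z.toNat, by omega, by exact_mod_cast (Int.toNat_of_nonneg (by omega)).symm⟩

/-- if the subshift of a primitive compatible random substitution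
contains a periodic point, then the ℓ¹-normalised right PF eigenvector is
rational and the PF eigenvalue is a positive integer. -/
theorem periodic_implies_rational_integer [Fintype A] [DecidableEq A]
    (θ : A → Set (List A)) (hθ : RandomSubstitution θ)
    (hc : Compatible θ) (hprim : Primitive θ)
    (M : A → A → ℕ) (hM : ∀ b : A, ∀ u ∈ θ b, ∀ a : A, u.count a = M a b)
    (R : A → ℝ) (hRpos : ∀ a : A, 0 < R a) (hsum : (∑ a : A, R a) = 1)
    (lam : ℝ) (hEig : ∀ a : A, (∑ b : A, (M a b : ℝ) * R b) = lam * R a)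
    (hper : ∃ x ∈ Subshift θ, IsPeriodic x) :
    (∀ a : A, ∃ q : ℚ, R a = (q : ℝ)) ∧ ∃ m : ℕ, 0 < m ∧ lam = (m : ℝ) :=
  periodic_implies_rational_integer_general θ hθ hprim M hM R hRpos hsum lam hEig hper
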